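/- Let m ≥ 1, c ∈ (0,1), and p : Fin m → ℝ with c ≤ p_i ≤ 1 for every i. Then every entry of the expected squared mixing matrix satisfies (M_p)_{j j'} ≥ (c²/m)·(1 − (1−c)^m) for all j, j' ∈ Fin m. -/

import Mathlib

open Matrix Finset

/-- The mixing matrix `W(A)`: `W(A)_{ij} = 1/|A|` if `i,j ∈ A`, `1` if `i = j ∉ A`, `0` otherwise. -/
noncomputable def mixW {m : ℕ} (A : Finset (Fin m)) : Matrix (Fin m) (Fin m) ℝ :=
  Matrix.of fun i j => if i ∈ A ∧ j ∈ A then ((A.card : ℝ))⁻¹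
    else if i = j ∧ i ∉ A then 1 else 0

/-- Bernoulli weight of a subset `A` under activation probabilities `p`. -/
noncomputable def bernWeight {m : ℕ} (p : Fin m → ℝ) (A : Finset (Fin m)) : ℝ :=
  (∏ i ∈ A, p i) * ∏ i ∈ Aᶜ, (1 - p i)

/-- The expected squared mixing matrix `M_p = Σ_A π_p(A) W(A)²`. -/
noncomputable def expSqMix {m : ℕ} (p : Fin m → ℝ) : Matrix (Fin m) (Fin m) ℝ :=
  ∑ A : Finset (Fin m), bernWeight p A • (mixW A * mixW A)

/-! Only the activation sets `A ⊇ {j, j'}` are needed: for them `(W(A)²)_{jj'} = 1/|A| ≥ 1/m`, and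
their total Bernoulli weight is `p_j p_{j'} ≥ c²`. The factor `1 - (1 - c)^m ≤ 1` is then slack. -/

section

variable {m : ℕ}

lemma mixW_nonneg (A : Finset (Fin m)) (i j : Fin m) : 0 ≤ mixW A i j := by
  simp only [mixW, of_apply]
  split_ifs <;> positivity

lemma mixW_mul_self_apply_of_mem {A : Finset (Fin m)} {j j' : Fin m}
    (hj : j ∈ A) (hj' : j' ∈ A) : (mixW A * mixW A) j j' = (#A : ℝ)⁻¹ := by
  have hA : (#A : ℝ) ≠ 0 := Nat.cast_ne_zero.mpr (card_ne_zero_of_mem hj)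
  have hterm : ∀ k ∈ A, mixW A j k * mixW A k j' = (#A : ℝ)⁻¹ * (#A : ℝ)⁻¹ := fun k hk => by
    simp [mixW, hj, hj', hk]
  rw [mul_apply, ← sum_subset (subset_univ A) fun k _ hk => by simp [mixW, hj, hk],
    sum_congr rfl hterm, sum_const, nsmul_eq_mul]
  field_simp

lemma inv_le_mixW_mul_self_apply {A : Finset (Fin m)} {j j' : Fin m}
    (hj : j ∈ A) (hj' : j' ∈ A) : (m : ℝ)⁻¹ ≤ (mixW A * mixW A) j j' := by
  rw [mixW_mul_self_apply_of_mem hj hj']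
  refine inv_anti₀ (by exact_mod_cast card_pos.mpr ⟨j, hj⟩) ?_
  exact_mod_cast (card_le_univ A).trans_eq (Fintype.card_fin m)

lemma mixW_mul_self_apply_nonneg (A : Finset (Fin m)) (i j : Fin m) :
    0 ≤ (mixW A * mixW A) i j := by
  rw [mul_apply]
  exact sum_nonneg fun k _ => mul_nonneg (mixW_nonneg A i k) (mixW_nonneg A k j)

lemma bernWeight_nonneg {p : Fin m → ℝ} (hp : ∀ i, 0 ≤ p i ∧ p i ≤ 1)
    (A : Finset (Fin m)) : 0 ≤ bernWeight p A :=
  mul_nonneg (prod_nonneg fun i _ => (hp i).1) (prod_nonneg fun i _ => sub_nonneg.mpr (hp i).2)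

/-- Expanding `∏ i, (p i + r i)` with `r = 1 - p` off `S` and `r = 0` on `S` keeps exactly the
sets `A ⊇ S`, while each factor with `i ∈ S` is `p i`. -/
lemma sum_bernWeight_of_subset (p : Fin m → ℝ) (S : Finset (Fin m)) :
    ∑ A with S ⊆ A, bernWeight p A = ∏ i ∈ S, p i := by
  set r : Fin m → ℝ := fun i => if i ∈ S then 0 else 1 - p i
  have hterm : ∀ A : Finset (Fin m),
      (∏ i ∈ A, p i) * ∏ i ∈ Aᶜ, r i = if S ⊆ A then bernWeight p A else 0 := by
    intro A
    split_ifs with hSA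
    · refine congrArg _ (prod_congr rfl fun i hi => if_neg fun hiS => ?_)
      exact mem_compl.mp hi (hSA hiS)
    · obtain ⟨i, hiS, hiA⟩ := not_subset.mp hSA
      rw [prod_eq_zero (f := r) (mem_compl.mpr hiA) (if_pos hiS), mul_zero]
  calc ∑ A with S ⊆ A, bernWeight p A
      = ∑ A : Finset (Fin m), (∏ i ∈ A, p i) * ∏ i ∈ Aᶜ, r i := by
        rw [sum_filter]; exact sum_congr rfl fun A _ => (hterm A).symm
    _ = ∏ i, (p i + r i) := (Fintype.prod_add p r).symm
    _ = ∏ i, if i ∈ S then p i else 1 := prod_congr rfl fun i _ => by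
        by_cases hi : i ∈ S <;> simp [r, hi]
    _ = ∏ i ∈ S, p i := Fintype.prod_ite_mem S p

lemma inv_mul_prod_le_expSqMix_apply {p : Fin m → ℝ} (hp : ∀ i, 0 ≤ p i ∧ p i ≤ 1)
    (j j' : Fin m) : (m : ℝ)⁻¹ * ∏ i ∈ {j, j'}, p i ≤ expSqMix p j j' := by
  have hentry : expSqMix p j j' = ∑ A, bernWeight p A * (mixW A * mixW A) j j' := by
    simp [expSqMix, Matrix.sum_apply]
  rw [hentry, ← sum_bernWeight_of_subset, mul_sum]
  calc ∑ A with {j, j'} ⊆ A, (m : ℝ)⁻¹ * bernWeight p A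
      ≤ ∑ A with {j, j'} ⊆ A, bernWeight p A * (mixW A * mixW A) j j' :=
        sum_le_sum fun A hA => by
          obtain ⟨hj, hj'⟩ := insert_subset_iff.mp (mem_filter.mp hA).2
          rw [mul_comm]
          exact mul_le_mul_of_nonneg_left
            (inv_le_mixW_mul_self_apply hj (singleton_subset_iff.mp hj')) (bernWeight_nonneg hp A)
    _ ≤ ∑ A, bernWeight p A * (mixW A * mixW A) j j' :=
        sum_le_sum_of_subset_of_nonneg (filter_subset _ _) fun A _ _ =>
          mul_nonneg (bernWeight_nonneg hp A) (mixW_mul_self_apply_nonneg A j j')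

end

theorem expSqMix_entry_ge_general {m : ℕ} (c : ℝ) (hc : c ∈ Set.Ioo (0:ℝ) 1)
    (p : Fin m → ℝ) (hp : ∀ i, c ≤ p i ∧ p i ≤ 1) (j j' : Fin m) :
    c ^ 2 / m * (1 - (1 - c) ^ m) ≤ expSqMix p j j' := by
  obtain ⟨hc0, hc1⟩ := hc
  have hpair : c ^ 2 ≤ ∏ i ∈ {j, j'}, p i :=
    calc c ^ 2 ≤ c ^ #{j, j'} := pow_le_pow_of_le_one hc0.le hc1.le card_le_two
      _ = ∏ _ ∈ {j, j'}, c := (prod_const c).symm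
      _ ≤ ∏ i ∈ {j, j'}, p i := prod_le_prod (fun _ _ => hc0.le) fun i _ => (hp i).1
  calc c ^ 2 / m * (1 - (1 - c) ^ m) ≤ c ^ 2 / m := by
        have : 0 ≤ (1 - c) ^ m := pow_nonneg (by linarith) m
        exact mul_le_of_le_one_right (by positivity) (by linarith)
    _ ≤ (m : ℝ)⁻¹ * ∏ i ∈ {j, j'}, p i := by
        rw [div_eq_inv_mul]; exact mul_le_mul_of_nonneg_left hpair (by positivity)
    _ ≤ expSqMix p j j' :=
        inv_mul_prod_le_expSqMix_apply (fun i => ⟨hc0.le.trans (hp i).1, (hp i).2⟩) j j'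

theorem expSqMix_entry_ge {m : ℕ} (hm : 1 ≤ m) (c : ℝ) (hc : c ∈ Set.Ioo (0:ℝ) 1)
    (p : Fin m → ℝ) (hp : ∀ i, c ≤ p i ∧ p i ≤ 1) (j j' : Fin m) :
    c ^ 2 / m * (1 - (1 - c) ^ m) ≤ expSqMix p j j' :=
  expSqMix_entry_ge_general c hc p hp j j'
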